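/- Let H ∈ ℝ^{m×d}, Y ∈ ℝ^{m×c}, G ∈ ℝ^{n×d}, Z ∈ ℝ^{n×c} be real matrices, Θ ∈ ℝ^{d×c}, and α, β real scalars. Then, in the Frobenius norm, ‖α·Hᵀ(HΘ − Y) − β·Gᵀ(GΘ − Z)‖_F ≤ ‖α·HᵀY − β·GᵀZ‖_F + ‖α·HᵀH − β·GᵀG‖_F · ‖Θ‖_F. That is, the normalized per-class gradient-matching discrepancy is bounded by the mean-feature alignment term plus the feature-covariance alignment term multiplied by the Frobenius norm of the parameter matrix. -/
import Mathlib


open Matrix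

attribute [local instance] Matrix.frobeniusNormedAddCommGroup Matrix.frobeniusNormedSpace

/-- In Frobenius norm, the normalized per-class gradient-matching discrepancy is bounded by
the mean-feature alignment term plus the feature-covariance alignment term multiplied by
the Frobenius norm of the parameter matrix:
`‖α·Hᵀ(HΘ − Y) − β·Gᵀ(GΘ − Z)‖_F ≤ ‖α·HᵀY − β·GᵀZ‖_F + ‖α·HᵀH − β·GᵀG‖_F · ‖Θ‖_F`. -/
theorem stmt_2 (m n d c : ℕ)
    (H : Matrix (Fin m) (Fin d) ℝ) (Y : Matrix (Fin m) (Fin c) ℝ)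
    (G : Matrix (Fin n) (Fin d) ℝ) (Z : Matrix (Fin n) (Fin c) ℝ)
    (Θ : Matrix (Fin d) (Fin c) ℝ) (α β : ℝ) :
    ‖α • (Hᵀ * (H * Θ - Y)) - β • (Gᵀ * (G * Θ - Z))‖ ≤
      ‖α • (Hᵀ * Y) - β • (Gᵀ * Z)‖ + ‖α • (Hᵀ * H) - β • (Gᵀ * G)‖ * ‖Θ‖ := by
  have key : α • (Hᵀ * (H * Θ - Y)) - β • (Gᵀ * (G * Θ - Z)) =
      (α • (Hᵀ * H) - β • (Gᵀ * G)) * Θ - (α • (Hᵀ * Y) - β • (Gᵀ * Z)) := by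
    simp only [Matrix.mul_sub, Matrix.sub_mul, Matrix.smul_mul, Matrix.mul_assoc, smul_sub]
    abel
  rw [key]
  calc ‖(α • (Hᵀ * H) - β • (Gᵀ * G)) * Θ - (α • (Hᵀ * Y) - β • (Gᵀ * Z))‖
      ≤ ‖(α • (Hᵀ * H) - β • (Gᵀ * G)) * Θ‖ + ‖α • (Hᵀ * Y) - β • (Gᵀ * Z)‖ :=
        norm_sub_le _ _
    _ ≤ ‖α • (Hᵀ * H) - β • (Gᵀ * G)‖ * ‖Θ‖ + ‖α • (Hᵀ * Y) - β • (Gᵀ * Z)‖ := by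
        gcongr; exact Matrix.frobenius_norm_mul _ _
    _ = _ := by ring
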